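/- Let k be a field, let (F, G, ◁, ▷) be a matched pair of groups with G finite, let σ : G × F × F → kˣ be a normalized cocycle and τ : G × G × F → kˣ a normalized co-cocycle satisfying the compatibility condition. Let A be the crossed product algebra with k-basis {p_g # f | g ∈ G, f ∈ F}, multiplication (p_g # f)(p_{g'} # f') = δ_{g ◁ f, g'} σ(g; f, f') (p_g # f f') and unit Σ_{g ∈ G} p_g # 1_F. Define the k-linear map S : A → A on basis elements by S(p_g # f) = σ(g⁻¹; g ▷ f, (g ▷ f)⁻¹)⁻¹ τ(g⁻¹, g; f)⁻¹ (p_{(g ◁ f)⁻¹} # (g ▷ f)⁻¹). Then for all g ∈ G and f ∈ F one has Σ_{x ∈ G} τ(g x⁻¹, x; f) · S(p_{g x⁻¹} # (x ▷ f)) · (p_x # f) = δ_{g, 1_G} Σ_{y ∈ G} p_y # 1_F in A (i.e. the antipode axiom m(S ⊗ id)Δ = uε holds for the crossed coproduct Δ(p_g # f) = Σ_{x ∈ G} τ(g x⁻¹, x; f)(p_{g x⁻¹} # (x ▷ f)) ⊗ (p_x # f) and counit ε(p_g # f) = δ_{g, 1_G}). -/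

import Mathlib

/-!
Since `S(p_h # φ)` lies on `p_{(h ◁ φ)⁻¹}` and `(h ◁ φ)⁻¹ ◁ (h ▷ φ)⁻¹ = h⁻¹`, the product
`S(p_{g x⁻¹} # (x ▷ f)) (p_x # f)` vanishes unless `x g⁻¹ = x`, i.e. `g = 1`. For `g = 1` the
cocycle identity at `(f, f⁻¹, f)` and the co-cocycle identity at `(x, x⁻¹, x)` cancel all scalars,
so the `x`-th summand is `p_{x ◁ f} # 1`, and `x ↦ x ◁ f` permutes `G`.
-/

/-- The crossed product multiplication on the free `k`-module with basis
`{p_g # f | g ∈ G, f ∈ F}` (realized as finitely supported functions on `G × F`):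
`(p_g # f)(p_{g'} # f') = δ_{g ◁ f, g'} σ(g; f, f') (p_g # f f')`. -/
noncomputable def cpMul {k F G : Type*} [Field k] [Group F] [Group G] [DecidableEq G]
    (coa : G → F → G) (σ : G → F → F → kˣ)
    (a b : (G × F) →₀ k) : (G × F) →₀ k :=
  a.sum fun p c => b.sum fun q d =>
    if coa p.1 p.2 = q.1 then
      Finsupp.single (p.1, p.2 * q.2) (c * d * (σ p.1 p.2 q.2 : k))
    else 0

/-- The element `Σ_{g ∈ G} p_g # 1_F`. -/
noncomputable def cpOne {k F G : Type*} [Field k] [One F] [Fintype G] : (G × F) →₀ k :=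
  ∑ g : G, Finsupp.single (g, (1 : F)) (1 : k)

/-- The value of the antipode `S` on the basis element `p_g # f`:
`S(p_g # f) = σ(g⁻¹; g ▷ f, (g ▷ f)⁻¹)⁻¹ τ(g⁻¹, g; f)⁻¹ (p_{(g ◁ f)⁻¹} # (g ▷ f)⁻¹)`;
`S` is extended `k`-linearly to the whole module. -/
noncomputable def cpS {k F G : Type*} [Field k] [Group F] [Group G]
    (tri : G → F → F) (coa : G → F → G)
    (σ : G → F → F → kˣ) (τ : G → G → F → kˣ) (g : G) (f : F) : (G × F) →₀ k :=
  Finsupp.single ((coa g f)⁻¹, (tri g f)⁻¹)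
    ((σ g⁻¹ (tri g f) (tri g f)⁻¹ : k)⁻¹ * (τ g⁻¹ g f : k)⁻¹)

/-- `tri g f = g ▷ f` and `coa g f = g ◁ f`. -/
structure IsMatchedPair {F G : Type*} [Group F] [Group G] (tri : G → F → F) (coa : G → F → G) :
    Prop where
  tri_one : ∀ f, tri 1 f = f
  tri_mul : ∀ g g' f, tri (g * g') f = tri g (tri g' f)
  coa_one : ∀ g, coa g 1 = g
  coa_mul : ∀ g f f', coa g (f * f') = coa (coa g f) f'
  tri_map_mul : ∀ g f f', tri g (f * f') = tri g f * tri (coa g f) f'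
  coa_map_mul : ∀ g g' f, coa (g * g') f = coa g (tri g' f) * coa g' f

namespace IsMatchedPair

variable {F G : Type*} [Group F] [Group G] {tri : G → F → F} {coa : G → F → G}
  (hM : IsMatchedPair tri coa)
include hM

theorem tri_one_right (g : G) : tri g 1 = 1 := by
  simpa [hM.coa_one] using hM.tri_map_mul g 1 1

theorem coa_one_left (f : F) : coa 1 f = 1 := by
  simpa [hM.tri_one] using hM.coa_map_mul 1 1 f

theorem coa_coa_inv (g : G) (f : F) : coa (coa g f) f⁻¹ = g := by
  rw [← hM.coa_mul, mul_inv_cancel, hM.coa_one]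

theorem coa_bijective (f : F) : Function.Bijective fun g => coa g f :=
  Function.bijective_iff_has_inverse.mpr
    ⟨fun g => coa g f⁻¹, fun g => hM.coa_coa_inv g f, fun g => by
      simpa using hM.coa_coa_inv g f⁻¹⟩

theorem tri_coa_inv (g : G) (f : F) : tri (coa g f) f⁻¹ = (tri g f)⁻¹ := by
  refine eq_inv_of_mul_eq_one_right ?_
  rw [← hM.tri_map_mul, mul_inv_cancel, hM.tri_one_right]

theorem tri_inv_tri (g : G) (f : F) : tri g⁻¹ (tri g f) = f := by
  rw [← hM.tri_mul, inv_mul_cancel, hM.tri_one]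

theorem coa_inv_tri (g : G) (f : F) : coa g⁻¹ (tri g f) = (coa g f)⁻¹ := by
  refine eq_inv_of_mul_eq_one_left ?_
  rw [← hM.coa_map_mul, inv_mul_cancel, hM.coa_one_left]

theorem coa_inv_coa_tri_inv (g : G) (f : F) : coa (coa g f)⁻¹ (tri g f)⁻¹ = g⁻¹ := by
  rw [← hM.tri_coa_inv, hM.coa_inv_tri, hM.coa_coa_inv]

end IsMatchedPair

theorem cocycle_coa_inv_self {F G M : Type*} [Group F] [MulOneClass M] {coa : G → F → G}
    {σ : G → F → F → M} (hσ_one_left : ∀ g f, σ g 1 f = 1) (hσ_one_right : ∀ g f, σ g f 1 = 1)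
    (hσ : ∀ g f f' f'', σ (coa g f) f' f'' * σ g f (f' * f'') = σ g f f' * σ g (f * f') f'')
    (g : G) (f : F) :
    σ (coa g f) f⁻¹ f = σ g f f⁻¹ := by
  simpa [hσ_one_left, hσ_one_right] using hσ g f f⁻¹ f

theorem cococycle_inv_self {F G M : Type*} [Group G] [MulOneClass M] {tri : G → F → F}
    {τ : G → G → F → M} (hτ_one_left : ∀ g f, τ 1 g f = 1) (hτ_one_right : ∀ g f, τ g 1 f = 1)
    (hτ : ∀ g g' g'' f, τ g g' (tri g'' f) * τ (g * g') g'' f = τ g (g' * g'') f * τ g' g'' f)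
    (g : G) (f : F) :
    τ g g⁻¹ (tri g f) = τ g⁻¹ g f := by
  simpa [hτ_one_left, hτ_one_right] using hτ g g⁻¹ g f

section CrossedProduct

variable {k F G : Type*} [Field k] [Group F] [Group G] [DecidableEq G]

theorem cpMul_single_single (coa : G → F → G) (σ : G → F → F → kˣ) (p q : G × F) (c d : k) :
    cpMul coa σ (Finsupp.single p c) (Finsupp.single q d) =
      if coa p.1 p.2 = q.1 then
        Finsupp.single (p.1, p.2 * q.2) (c * d * (σ p.1 p.2 q.2 : k)) else 0 := by
  unfold cpMul
  rw [Finsupp.sum_single_index, Finsupp.sum_single_index]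
  · split <;> simp
  · rw [Finsupp.sum_single_index] <;> split <;> simp

theorem cpMul_cpS_single_of_inv_ne {tri : G → F → F} {coa : G → F → G}
    (hM : IsMatchedPair tri coa) (σ : G → F → F → kˣ) (τ : G → G → F → kˣ) {g x : G}
    (hgx : g⁻¹ ≠ x) (φ f : F) (c : k) :
    cpMul coa σ (cpS tri coa σ τ g φ) (Finsupp.single (x, f) c) = 0 := by
  rw [cpS, cpMul_single_single, if_neg]
  rwa [hM.coa_inv_coa_tri_inv]

theorem smul_cpMul_cpS_inv_single {tri : G → F → F} {coa : G → F → G}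
    (hM : IsMatchedPair tri coa) {σ : G → F → F → kˣ} (hσ_one_left : ∀ g f, σ g 1 f = 1)
    (hσ_one_right : ∀ g f, σ g f 1 = 1)
    (hσ : ∀ g f f' f'', σ (coa g f) f' f'' * σ g f (f' * f'') = σ g f f' * σ g (f * f') f'')
    {τ : G → G → F → kˣ} (hτ_one_left : ∀ g f, τ 1 g f = 1) (hτ_one_right : ∀ g f, τ g 1 f = 1)
    (hτ : ∀ g g' g'' f, τ g g' (tri g'' f) * τ (g * g') g'' f = τ g (g' * g'') f * τ g' g'' f)
    (x : G) (f : F) :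
    (τ x⁻¹ x f : k) • cpMul coa σ (cpS tri coa σ τ x⁻¹ (tri x f)) (Finsupp.single (x, f) 1) =
      Finsupp.single (coa x f, 1) 1 := by
  rw [cpS, cpMul_single_single]
  simp only [hM.tri_inv_tri, hM.coa_inv_tri, inv_inv, inv_mul_cancel]
  rw [if_pos (hM.coa_coa_inv x f), Finsupp.smul_single,
    cocycle_coa_inv_self hσ_one_left hσ_one_right hσ,
    cococycle_inv_self hτ_one_left hτ_one_right hτ]
  congr 1
  rw [smul_eq_mul]
  field_simp

end CrossedProduct

theorem sum_single_comp_eq_cpOne {k F G : Type*} [Field k] [One F] [Fintype G] {e : G → G}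
    (he : Function.Bijective e) :
    ∑ x : G, Finsupp.single (e x, (1 : F)) (1 : k) = cpOne :=
  Fintype.sum_bijective e he _ _ fun _ => rfl

theorem crossedProduct_antipode_axiom_general {k : Type*} [Field k] {F : Type*} {G : Type*}
    [Group F] [Group G] [Fintype G] [DecidableEq G]
    (tri : G → F → F) (coa : G → F → G)
    (h1 : ∀ f : F, tri 1 f = f)
    (h2 : ∀ (g g' : G) (f : F), tri (g * g') f = tri g (tri g' f))
    (h3 : ∀ g : G, coa g 1 = g)
    (h4 : ∀ (g : G) (f f' : F), coa g (f * f') = coa (coa g f) f')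
    (h5 : ∀ (g : G) (f f' : F), tri g (f * f') = tri g f * tri (coa g f) f')
    (h6 : ∀ (g g' : G) (f : F), coa (g * g') f = coa g (tri g' f) * coa g' f)
    (σ : G → F → F → kˣ)
    (hσ1 : ∀ (g : G) (f : F), σ g 1 f = 1)
    (hσ2 : ∀ (g : G) (f : F), σ g f 1 = 1)
    (hσ4 : ∀ (g : G) (f f' f'' : F),
      σ (coa g f) f' f'' * σ g f (f' * f'') = σ g f f' * σ g (f * f') f'')
    (τ : G → G → F → kˣ)
    (hτ1 : ∀ (g : G) (f : F), τ 1 g f = 1)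
    (hτ2 : ∀ (g : G) (f : F), τ g 1 f = 1)
    (hτ4 : ∀ (g g' g'' : G) (f : F),
      τ g g' (tri g'' f) * τ (g * g') g'' f = τ g (g' * g'') f * τ g' g'' f) :
    ∀ (g : G) (f : F),
      ∑ x : G, (τ (g * x⁻¹) x f : k) •
          cpMul coa σ (cpS tri coa σ τ (g * x⁻¹) (tri x f))
            (Finsupp.single (x, f) (1 : k)) =
        (if g = (1 : G) then (1 : k) else 0) • (cpOne : (G × F) →₀ k) := by
  have hM : IsMatchedPair tri coa := ⟨h1, h2, h3, h4, h5, h6⟩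
  intro g f
  by_cases hg : g = 1
  · subst hg
    simp only [one_mul, if_true, one_smul,
      smul_cpMul_cpS_inv_single hM hσ1 hσ2 hσ4 hτ1 hτ2 hτ4]
    exact sum_single_comp_eq_cpOne (hM.coa_bijective f)
  · rw [if_neg hg, zero_smul]
    refine Finset.sum_eq_zero fun x _ => ?_
    have hgx : (g * x⁻¹)⁻¹ ≠ x := by simpa [mul_inv_rev, mul_eq_left] using hg
    rw [cpMul_cpS_single_of_inv_ne hM σ τ hgx, smul_zero]

/-- For a matched pair of groups with `G` finite, a normalized cocycle `σ` and a
normalized co-cocycle `τ` satisfying the compatibility condition, the antipode axiom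
`m(S ⊗ id)Δ = uε` holds on basis elements: for all `g ∈ G`, `f ∈ F`,
`Σ_{x ∈ G} τ(g x⁻¹, x; f) S(p_{g x⁻¹} # (x ▷ f)) (p_x # f) = δ_{g,1} Σ_{y ∈ G} p_y # 1_F`. -/
theorem crossedProduct_antipode_axiom {k : Type*} [Field k] {F : Type*} {G : Type*}
    [Group F] [Group G] [Fintype G] [DecidableEq G]
    (tri : G → F → F) (coa : G → F → G)
    (h1 : ∀ f : F, tri 1 f = f)
    (h2 : ∀ (g g' : G) (f : F), tri (g * g') f = tri g (tri g' f))
    (h3 : ∀ g : G, coa g 1 = g)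
    (h4 : ∀ (g : G) (f f' : F), coa g (f * f') = coa (coa g f) f')
    (h5 : ∀ (g : G) (f f' : F), tri g (f * f') = tri g f * tri (coa g f) f')
    (h6 : ∀ (g g' : G) (f : F), coa (g * g') f = coa g (tri g' f) * coa g' f)
    (σ : G → F → F → kˣ)
    (hσ1 : ∀ (g : G) (f : F), σ g 1 f = 1)
    (hσ2 : ∀ (g : G) (f : F), σ g f 1 = 1)
    (hσ3 : ∀ f f' : F, σ 1 f f' = 1)
    (hσ4 : ∀ (g : G) (f f' f'' : F),
      σ (coa g f) f' f'' * σ g f (f' * f'') = σ g f f' * σ g (f * f') f'')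
    (τ : G → G → F → kˣ)
    (hτ1 : ∀ (g : G) (f : F), τ 1 g f = 1)
    (hτ2 : ∀ (g : G) (f : F), τ g 1 f = 1)
    (hτ3 : ∀ g g' : G, τ g g' 1 = 1)
    (hτ4 : ∀ (g g' g'' : G) (f : F),
      τ g g' (tri g'' f) * τ (g * g') g'' f = τ g (g' * g'') f * τ g' g'' f)
    (hcomp : ∀ (g g' : G) (f f' : F),
      σ (g * g') f f' * τ g g' (f * f') =
        σ g (tri g' f) (tri (coa g' f) f') * σ g' f f' * τ g g' f *
          τ (coa g (tri g' f)) (coa g' f) f') :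
    ∀ (g : G) (f : F),
      ∑ x : G, (τ (g * x⁻¹) x f : k) •
          cpMul coa σ (cpS tri coa σ τ (g * x⁻¹) (tri x f))
            (Finsupp.single (x, f) (1 : k)) =
        (if g = (1 : G) then (1 : k) else 0) • (cpOne : (G × F) →₀ k) :=
  crossedProduct_antipode_axiom_general tri coa h1 h2 h3 h4 h5 h6 σ hσ1 hσ2 hσ4 τ hτ1 hτ2 hτ4
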